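/- arXiv:2505.05594 — 6 statements merged into one kernel-verified Lean document; each statement's English description precedes it below -/
import Mathlib

section
/- For every feature x < θ with T_M(θ − x) ≤ C_I − C_M, the agent prefers manipulation to improvement: u_M(x) ≥ u_I(x). In particular, if r = θ − T_M⁻¹(C_I − C_M) > 0 and T_M is continuous, then u_M(x) ≥ u_I(x) for all x ∈ [r, θ). -/
noncomputable section

open Set

/-- Generalized inverse (quantile function) of a CDF. -/
def ginv (T : ℝ → ℝ) (p : ℝ) : ℝ := sInf {b : ℝ | p ≤ T b}

/-- `T` is a boost CDF with minimum boost `blo` and maximum boost `bhi`. -/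
structure IsBoostCDF (T : ℝ → ℝ) (blo bhi : ℝ) : Prop where
  continuous : Continuous T
  mono : Monotone T
  nonneg : ∀ b, 0 ≤ T b
  le_one : ∀ b, T b ≤ 1
  eq_zero : ∀ b, b ≤ blo → T b = 0
  eq_one : ∀ b, bhi ≤ b → T b = 1

/-- Agent's utility from a costly action with boost CDF `T`, cost `C`, threshold `θ`,
at feature `x`.  (The utility of doing nothing is `0`.) -/
def util (T : ℝ → ℝ) (C θ x : ℝ) : ℝ := if x < θ then (1 - T (θ - x)) - C else -C

/-- Opt-in feature for an action with boost CDF `T`, cost `C`, and threshold `θ`. -/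
def optIn (T : ℝ → ℝ) (C θ : ℝ) : ℝ := max 0 (θ - ginv T (1 - C))

/-- Risk-taker feature. -/
def riskTaker (TM : ℝ → ℝ) (CM CI θ : ℝ) : ℝ := max 0 (θ - ginv TM (CI - CM))

/-- Flip features: features at which the agent is indifferent between `M` and `I`. -/
def IsFlip (TM TI : ℝ → ℝ) (CM CI θ bMhi bIlo f : ℝ) : Prop :=
  f ∈ Icc (θ - bMhi) (θ - bIlo) ∧ TM (θ - f) - TI (θ - f) = CI - CM

theorem util_le_util_of_le_sub_cost {TM TI : ℝ → ℝ} {CM CI θ x : ℝ} (hxθ : x < θ)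
    (hTI : 0 ≤ TI (θ - x)) (hTM : TM (θ - x) ≤ CI - CM) :
    util TI CI θ x ≤ util TM CM θ x := by
  simp only [util, if_pos hxθ]
  linarith

theorem le_of_le_ginv {T : ℝ → ℝ} (hT : Continuous T) {p b : ℝ}
    (hS : BddBelow {b | p ≤ T b}) (hb : b ≤ ginv T p) : T b ≤ p := by
  by_contra! hpb
  obtain ⟨b', hpb', hb'b⟩ :=
    (((hT.tendsto b).eventually (lt_mem_nhds hpb)).filter_mono nhdsWithin_le_nhds
      |>.and (self_mem_nhdsWithin (s := Iio b))).exists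
  exact (hb'b.trans_le hb).not_ge (csInf_le hS hpb'.le)

theorem risk_takers_prefer_manipulation_general
    (TM TI : ℝ → ℝ) (bMlo bMhi bIlo bIhi CM CI θ : ℝ)
    (hTM : IsBoostCDF TM bMlo bMhi) (hTI : IsBoostCDF TI bIlo bIhi) :
    (∀ x, 0 ≤ x → x < θ → TM (θ - x) ≤ CI - CM →
        util TI CI θ x ≤ util TM CM θ x)
    ∧ (0 < θ - ginv TM (CI - CM) →
        ∀ x, θ - ginv TM (CI - CM) ≤ x → x < θ →
          util TI CI θ x ≤ util TM CM θ x) := by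
  refine ⟨fun x _ hxθ hT ↦ util_le_util_of_le_sub_cost hxθ (hTI.nonneg _) hT, ?_⟩
  intro _ x hrx hxθ
  refine util_le_util_of_le_sub_cost hxθ (hTI.nonneg _) (le_of_le_ginv hTM.continuous ?_ ?_)
  · -- otherwise `ginv` takes its junk value `0`, and `θ ≤ x` would follow
    by_contra hS
    rw [ginv, Real.sInf_of_not_bddBelow hS] at hrx
    linarith
  · linarith

/-- Risk takers prefer manipulation: whenever `T_M(θ - x) ≤ C_I - C_M`, manipulation is
(weakly) preferred to improvement; in particular this holds on `[r, θ)` when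
`r = θ - T_M⁻¹(C_I - C_M) > 0`. -/
theorem risk_takers_prefer_manipulation
    (TM TI : ℝ → ℝ) (bMlo bMhi bIlo bIhi CM CI θ : ℝ)
    (hTM : IsBoostCDF TM bMlo bMhi) (hTI : IsBoostCDF TI bIlo bIhi)
    (hFOSD : ∀ b, TI b ≤ TM b)
    (hCM : 0 ≤ CM) (hCMI : CM ≤ CI) (hCI : CI < 1)
    (hθpos : 0 < θ) :
    (∀ x, 0 ≤ x → x < θ → TM (θ - x) ≤ CI - CM →
        util TI CI θ x ≤ util TM CM θ x)
    ∧ (0 < θ - ginv TM (CI - CM) →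
        ∀ x, θ - ginv TM (CI - CM) ≤ x → x < θ →
          util TI CI θ x ≤ util TM CM θ x) :=
  risk_takers_prefer_manipulation_general TM TI bMlo bMhi bIlo bIhi CM CI θ hTM hTI
end
end

section
/- Let G : ℝ → [0,∞) be continuous, let T_I be a boost CDF that is continuously differentiable with density τ_I and satisfies T_I(b) = 0 for b ≤ b̲_I, and let 0 ≤ C_M < C_I < 1. For θ with o_I(θ) := θ − T_I⁻¹(1 − C_I) > 0 and r(θ) := θ − T_M⁻¹(C_I − C_M) > o_I(θ), define the improvement impact Φ(θ) = ∫_{o_I(θ)}^{r(θ)} G(z) (1 − T_I(θ − z)) dz. If T_M⁻¹(C_I − C_M) ≤ b̲_I (acceptance under improvement is certain at r), then Φ is differentiable at θ with Φ'(θ) = G(r(θ)) − C_I · G(o_I(θ)) − ∫_{o_I(θ)}^{r(θ)} G(z) τ_I(θ − z) dz. -/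
/-!
With `a = T_I⁻¹ (1 - C_I)` and `b = T_M⁻¹ (C_I - C_M)`, substituting `u = t - z` gives
`Φ t = ∫ u in b..a, G (t - u) * (1 - T_I u)`, in which only the merely continuous `G` depends
on `t`. Integrating by parts against a primitive `K` of `G` moves that dependence onto the `C¹`
function `K`: the integral becomes boundary terms in `K (t - b)`, `K (t - a)` plus
`∫ u in b..a, τ_I u * K (t - u)`, which may be differentiated under the integral sign. The
boundary weights are `1 - T_I b = 1`, by certain acceptance, and `1 - T_I a = C_I`, by continuity
of `T_I`.
-/

noncomputable section

open Set MeasureTheory intervalIntegral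

theorem IsBoostCDF.apply_ginv {T : ℝ → ℝ} {blo bhi p : ℝ} (hT : IsBoostCDF T blo bhi)
    (hp0 : 0 < p) (hp1 : p ≤ 1) : T (ginv T p) = p := by
  set S := {b : ℝ | p ≤ T b}
  have hS : ∀ x ∈ S, blo < x := fun x hx => by
    by_contra! h
    have : p ≤ 0 := by simpa [S, hT.eq_zero x h] using hx
    linarith
  have hbdd : BddBelow S := ⟨blo, fun x hx => (hS x hx).le⟩
  have hmem : ginv T p ∈ S := (isClosed_le continuous_const hT.continuous).csInf_mem
    ⟨bhi, by simpa [S, hT.eq_one bhi le_rfl]⟩ hbdd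
  refine le_antisymm ?_ hmem
  by_contra! h
  -- intermediate value theorem on `[blo, ginv T p]` produces a smaller point of `S`
  obtain ⟨x, hx, hTx⟩ := intermediate_value_Icc (hS _ hmem).le hT.continuous.continuousOn
    ⟨by rw [hT.eq_zero blo le_rfl]; exact hp0.le, h.le⟩
  have : ginv T p ≤ x := csInf_le hbdd (show p ≤ T x from hTx.ge)
  rw [le_antisymm hx.2 this] at hTx
  linarith

theorem integral_mul_comp_const_sub (f g : ℝ → ℝ) (a b t : ℝ) :
    ∫ z in (t - a)..(t - b), f z * g (t - z) = ∫ u in b..a, g u * f (t - u) := by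
  have h := integral_comp_sub_left (fun u => g u * f (t - u)) t (a := t - a) (b := t - b)
  simp only [sub_sub_cancel] at h
  rw [← h]
  exact integral_congr fun z _ => mul_comm _ _

theorem hasDerivAt_integral_mul_comp_sub_of_hasDerivAt {τ K k : ℝ → ℝ} {a b : ℝ}
    (hτ : IntervalIntegrable τ volume a b) (hK : ∀ z, HasDerivAt K (k z) z) (hk : Continuous k)
    (θ : ℝ) :
    HasDerivAt (fun t => ∫ u in a..b, τ u * K (t - u))
      (∫ u in a..b, τ u * k (θ - u)) θ := by
  have hKc : Continuous K := continuous_iff_continuousAt.2 fun z => (hK z).continuousAt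
  obtain ⟨C, hC⟩ := ((isCompact_closedBall θ 1).prod (isCompact_uIcc (a := a) (b := b))
    ).exists_bound_of_continuousOn (hk.comp continuous_sub).continuousOn
  refine (hasDerivAt_integral_of_dominated_loc_of_deriv_le (bound := fun u => ‖τ u‖ * C)
    (F' := fun x u => τ u * k (x - u)) (Metric.ball_mem_nhds θ one_pos)
    (.of_forall fun x => hτ.def'.aestronglyMeasurable.mul
      (hKc.comp (continuous_sub_left x)).aestronglyMeasurable)
    (hτ.mul_continuousOn (hKc.comp (continuous_sub_left θ)).continuousOn)
    (hτ.def'.aestronglyMeasurable.mul (hk.comp (continuous_sub_left θ)).aestronglyMeasurable)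
    (.of_forall fun u hu x hx => ?_) (hτ.norm.mul_const C)
    (.of_forall fun u _ x _ => ((hK (x - u)).comp_sub_const x u).const_mul (τ u))).2
  rw [norm_mul]
  exact mul_le_mul_of_nonneg_left
    (hC (x, u) ⟨Metric.ball_subset_closedBall hx, uIoc_subset_uIcc hu⟩) (norm_nonneg _)

theorem integral_mul_comp_const_sub_eq_of_hasDerivAt {G K T τ : ℝ → ℝ} (hG : Continuous G)
    (hK : ∀ z, HasDerivAt K (G z) z) (hT : ∀ x, HasDerivAt T (τ x) x) (hτ : Continuous τ)
    (a b t : ℝ) :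
    ∫ z in (t - a)..(t - b), G z * T (t - z)
      = T b * K (t - b) - T a * K (t - a) + ∫ u in b..a, τ u * K (t - u) := by
  have ibp := integral_mul_deriv_eq_deriv_mul (a := t - a) (b := t - b)
    (fun z _ => (hT (t - z)).comp_const_sub t z) (fun z _ => hK z)
    ((hτ.comp (continuous_sub_left t)).neg.intervalIntegrable _ _)
    (hG.intervalIntegrable _ _)
  simp only [sub_sub_cancel, neg_mul, intervalIntegral.integral_neg, sub_neg_eq_add] at ibp
  rw [← integral_mul_comp_const_sub K τ]
  simpa only [mul_comm (G _), mul_comm (K _)] using ibp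

theorem hasDerivAt_integral_mul_comp_const_sub {G T τ : ℝ → ℝ} (hG : Continuous G)
    (hT : ∀ x, HasDerivAt T (τ x) x) (hτ : Continuous τ) (a b θ : ℝ) :
    HasDerivAt (fun t => ∫ z in (t - a)..(t - b), G z * T (t - z))
      (T b * G (θ - b) - T a * G (θ - a) + ∫ z in (θ - a)..(θ - b), G z * τ (θ - z))
      θ := by
  set K := fun z => ∫ s in (0 : ℝ)..z, G s
  have hK : ∀ z, HasDerivAt K (G z) z := fun z => (hG.integral_hasStrictDerivAt 0 z).hasDerivAt
  have hKsub : ∀ c, HasDerivAt (fun t => K (t - c)) (G (θ - c)) θ :=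
    fun c => (hK _).comp_sub_const θ c
  rw [integral_mul_comp_const_sub]
  refine ((((hKsub b).const_mul (T b)).sub ((hKsub a).const_mul (T a))).add
    (hasDerivAt_integral_mul_comp_sub_of_hasDerivAt (hτ.intervalIntegrable b a) hK hG θ)
    ).congr_of_eventuallyEq (.of_forall fun t => ?_)
  exact integral_mul_comp_const_sub_eq_of_hasDerivAt hG hK hT hτ a b t

theorem improvement_impact_deriv_general
    (G TM TI τI : ℝ → ℝ) (bIlo bIhi CM CI θ : ℝ)
    (hG : Continuous G)
    (hTI : IsBoostCDF TI bIlo bIhi)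
    (hτI : Continuous τI)
    (hTI' : ∀ b, HasDerivAt TI (τI b) b)
    (hCM : 0 ≤ CM) (hCC : CM < CI) (hCI : CI < 1)
    (hcert : ginv TM (CI - CM) ≤ bIlo) :
    HasDerivAt
      (fun t => ∫ z in (t - ginv TI (1 - CI))..(t - ginv TM (CI - CM)),
        G z * (1 - TI (t - z)))
      (G (θ - ginv TM (CI - CM)) - CI * G (θ - ginv TI (1 - CI))
        - ∫ z in (θ - ginv TI (1 - CI))..(θ - ginv TM (CI - CM)), G z * τI (θ - z))
      θ := by
  have hTIo : TI (ginv TI (1 - CI)) = 1 - CI := hTI.apply_ginv (by linarith) (by linarith)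
  have hTIr : TI (ginv TM (CI - CM)) = 0 := hTI.eq_zero _ hcert
  have h := hasDerivAt_integral_mul_comp_const_sub hG (fun b => (hTI' b).const_sub 1) hτI.neg
    (ginv TI (1 - CI)) (ginv TM (CI - CM)) θ
  simp only [hTIo, hTIr, mul_neg, intervalIntegral.integral_neg] at h
  convert h using 1
  ring

/-- Leibniz rule for the improvement impact (Type 1):
`Φ(θ) = ∫_{o_I(θ)}^{r(θ)} G(z)(1 - T_I(θ - z)) dz` with `o_I(θ) = θ - T_I⁻¹(1 - C_I)` and
`r(θ) = θ - T_M⁻¹(C_I - C_M)`; if acceptance under improvement is certain at `r`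
(`T_M⁻¹(C_I - C_M) ≤ b̲_I`), then
`Φ'(θ) = G(r(θ)) - C_I G(o_I(θ)) - ∫_{o_I(θ)}^{r(θ)} G(z) τ_I(θ - z) dz`. -/
theorem improvement_impact_deriv
    (G TM TI τI : ℝ → ℝ) (bIlo bIhi CM CI θ : ℝ)
    (hG : Continuous G)
    (hTI : IsBoostCDF TI bIlo bIhi)
    (hτI : Continuous τI)
    (hTI' : ∀ b, HasDerivAt TI (τI b) b)
    (hCM : 0 ≤ CM) (hCC : CM < CI) (hCI : CI < 1)
    (hoI : 0 < θ - ginv TI (1 - CI))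
    (hr : θ - ginv TI (1 - CI) < θ - ginv TM (CI - CM))
    (hcert : ginv TM (CI - CM) ≤ bIlo) :
    HasDerivAt
      (fun t => ∫ z in (t - ginv TI (1 - CI))..(t - ginv TM (CI - CM)),
        G z * (1 - TI (t - z)))
      (G (θ - ginv TM (CI - CM)) - CI * G (θ - ginv TI (1 - CI))
        - ∫ z in (θ - ginv TI (1 - CI))..(θ - ginv TM (CI - CM)), G z * τI (θ - z))
      θ :=
  improvement_impact_deriv_general G TM TI τI bIlo bIhi CM CI θ hG hTI hτI hTI' hCM hCC hCI hcert
end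
end

section
/- Consider two groups s ∈ {a, b} with population shares n_s > 0, qualification rates α_s ∈ (0,1), continuous feature densities G_s⁰, G_s¹ on [0,∞), and total utility U(θ_a, θ_b) = Σ_{s∈{a,b}} n_s [u₊ α_s ∫_{θ_s}^∞ G_s¹(x) dx − u₋ (1−α_s) ∫_{θ_s}^∞ G_s⁰(x) dx]. Let C_a, C_b : ℝ → ℝ be continuously differentiable constraint functions with C_s'(θ) ≠ 0 for all relevant θ. If (θ_a*, θ_b*) is an interior local maximizer of U subject to the fairness constraint C_a(θ_a) = C_b(θ_b), then Σ_{s∈{a,b}} n_s · [u₊ α_s G_s¹(θ_s*) − u₋ (1−α_s) G_s⁰(θ_s*)] / C_s'(θ_s*) = 0. -/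
/-!
Lagrange multipliers with a single constraint `C_a(θ_a) - C_b(θ_b) = 0`: at a constrained local
extremum the gradient of `U` is proportional to the gradient `(C_a'(θ_a), -C_b'(θ_b))` of the
constraint, the multiplier of `U` being nonzero because the constraint gradient is. By the
fundamental theorem of calculus, `∂U/∂θ_s = -n_s [u₊ α_s G_s¹(θ_s) - u₋ (1-α_s) G_s⁰(θ_s)]`,
and eliminating the multiplier gives the stated identity.
-/

open Set MeasureTheory

theorem hasStrictDerivAt_integral_Ioi {g : ℝ → ℝ} (hgc : Continuous g) (hgi : Integrable g)
    (t : ℝ) : HasStrictDerivAt (fun θ => ∫ x in Ioi θ, g x) (-g t) t := by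
  have hsplit : (fun θ => ∫ x in Ioi θ, g x) = fun θ => (∫ x in Ioi t, g x) - ∫ x in t..θ, g x := by
    funext θ
    rw [eq_sub_iff_add_eq', intervalIntegral.integral_interval_add_Ioi hgi.integrableOn
      hgi.integrableOn]
  rw [hsplit]
  exact (hgc.integral_hasStrictDerivAt t t).const_sub _

theorem hasStrictDerivAt_tail_utility {G0 G1 : ℝ → ℝ} (hG0c : Continuous G0)
    (hG1c : Continuous G1) (hG0i : Integrable G0) (hG1i : Integrable G1) (n c0 c1 t : ℝ) :
    HasStrictDerivAt
      (fun θ => n * (c1 * (∫ x in Ioi θ, G1 x) - c0 * ∫ x in Ioi θ, G0 x))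
      (-(n * (c1 * G1 t - c0 * G0 t))) t :=
  ((((hasStrictDerivAt_integral_Ioi hG1c hG1i t).const_mul c1).sub
    ((hasStrictDerivAt_integral_Ioi hG0c hG0i t).const_mul c0)).const_mul n).congr_deriv
    (by ring)

theorem div_add_div_eq_zero_of_isLocalExtrOn {F H Ca Cb : ℝ → ℝ}
    {F' H' ca cb a b : ℝ} (hF : HasStrictDerivAt F F' a) (hH : HasStrictDerivAt H H' b)
    (hCa : HasStrictDerivAt Ca ca a) (hCb : HasStrictDerivAt Cb cb b)
    (hca : ca ≠ 0) (hcb : cb ≠ 0) (hab : Ca a = Cb b)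
    (hextr : IsLocalExtrOn (fun p : ℝ × ℝ => F p.1 + H p.2) {p | Ca p.1 = Cb p.2} (a, b)) :
    F' / ca + H' / cb = 0 := by
  have hset : {p : ℝ × ℝ | Ca p.1 = Cb p.2}
      = {p | Ca p.1 - Cb p.2 = Ca (a, b).1 - Cb (a, b).2} := by
    ext p
    simp [hab, sub_eq_zero]
  rw [hset] at hextr
  obtain ⟨μ, ν, hμν, hlin⟩ := hextr.exists_multipliers_of_hasStrictFDerivAt_1d
    ((hCa.hasStrictFDerivAt.comp (a, b) hasStrictFDerivAt_fst).sub
      (hCb.hasStrictFDerivAt.comp (a, b) hasStrictFDerivAt_snd))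
    ((hF.hasStrictFDerivAt.comp (a, b) hasStrictFDerivAt_fst).add
      (hH.hasStrictFDerivAt.comp (a, b) hasStrictFDerivAt_snd))
  have h1 : μ * ca + ν * F' = 0 := by simpa using congrArg (fun L => L (1, 0)) hlin
  have h2 : -(μ * cb) + ν * H' = 0 := by simpa using congrArg (fun L => L (0, 1)) hlin
  have hν : ν ≠ 0 := by
    rintro rfl
    exact hμν (by simpa [hca] using h1)
  have hscaled : ν * (F' * cb + ca * H') = 0 := by linear_combination cb * h1 + ca * h2
  rw [div_add_div _ _ hca hcb, div_eq_zero_iff, or_iff_left (mul_ne_zero hca hcb)]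
  exact (mul_eq_zero.1 hscaled).resolve_left hν

theorem fair_nonstrategic_foc_general
    (up um na nb αa αb : ℝ)
    (G0a G1a G0b G1b Ca Cb Ca' Cb' : ℝ → ℝ)
    (hG0ac : Continuous G0a) (hG1ac : Continuous G1a)
    (hG0bc : Continuous G0b) (hG1bc : Continuous G1b)
    (hG0ai : Integrable G0a) (hG1ai : Integrable G1a)
    (hG0bi : Integrable G0b) (hG1bi : Integrable G1b)
    (hCa : ∀ θ, HasDerivAt Ca (Ca' θ) θ) (hCa'c : Continuous Ca')
    (hCa'0 : ∀ θ, Ca' θ ≠ 0)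
    (hCb : ∀ θ, HasDerivAt Cb (Cb' θ) θ) (hCb'c : Continuous Cb')
    (hCb'0 : ∀ θ, Cb' θ ≠ 0)
    (θa θb : ℝ)
    (hfeas : Ca θa = Cb θb)
    (hmax : IsLocalMaxOn
      (fun p : ℝ × ℝ =>
        na * (up * αa * (∫ x in Ioi p.1, G1a x)
              - um * (1 - αa) * ∫ x in Ioi p.1, G0a x)
        + nb * (up * αb * (∫ x in Ioi p.2, G1b x)
              - um * (1 - αb) * ∫ x in Ioi p.2, G0b x))
      {p : ℝ × ℝ | Ca p.1 = Cb p.2} (θa, θb)) :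
    na * (up * αa * G1a θa - um * (1 - αa) * G0a θa) / Ca' θa
      + nb * (up * αb * G1b θb - um * (1 - αb) * G0b θb) / Cb' θb = 0 := by
  have hCaS : HasStrictDerivAt Ca (Ca' θa) θa :=
    hasStrictDerivAt_of_hasDerivAt_of_continuousAt (.of_forall hCa) hCa'c.continuousAt
  have hCbS : HasStrictDerivAt Cb (Cb' θb) θb :=
    hasStrictDerivAt_of_hasDerivAt_of_continuousAt (.of_forall hCb) hCb'c.continuousAt
  have h := div_add_div_eq_zero_of_isLocalExtrOn
    (hasStrictDerivAt_tail_utility hG0ac hG1ac hG0ai hG1ai na (um * (1 - αa)) (up * αa) θa)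
    (hasStrictDerivAt_tail_utility hG0bc hG1bc hG0bi hG1bi nb (um * (1 - αb)) (up * αb) θb)
    hCaS hCbS (hCa'0 θa) (hCb'0 θb) hfeas (.inr hmax)
  rwa [neg_div, neg_div, ← neg_add, neg_eq_zero] at h

/-- First-order condition for the fair non-strategic firm (Lemma 4): at an interior local
maximizer of the two-group utility subject to the fairness constraint
`C_a(θ_a) = C_b(θ_b)`,
`Σ_s n_s [u₊ α_s G_s¹(θ_s) - u₋ (1-α_s) G_s⁰(θ_s)] / C_s'(θ_s) = 0`. -/
theorem fair_nonstrategic_foc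
    (up um na nb αa αb : ℝ)
    (G0a G1a G0b G1b Ca Cb Ca' Cb' : ℝ → ℝ)
    (hup : 0 < up) (hum : 0 < um) (hna : 0 < na) (hnb : 0 < nb)
    (hαa : αa ∈ Ioo (0 : ℝ) 1) (hαb : αb ∈ Ioo (0 : ℝ) 1)
    (hG0ann : ∀ x, 0 ≤ G0a x) (hG1ann : ∀ x, 0 ≤ G1a x)
    (hG0bnn : ∀ x, 0 ≤ G0b x) (hG1bnn : ∀ x, 0 ≤ G1b x)
    (hG0ac : Continuous G0a) (hG1ac : Continuous G1a)
    (hG0bc : Continuous G0b) (hG1bc : Continuous G1b)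
    (hG0ai : Integrable G0a) (hG1ai : Integrable G1a)
    (hG0bi : Integrable G0b) (hG1bi : Integrable G1b)
    (hCa : ∀ θ, HasDerivAt Ca (Ca' θ) θ) (hCa'c : Continuous Ca')
    (hCa'0 : ∀ θ, Ca' θ ≠ 0)
    (hCb : ∀ θ, HasDerivAt Cb (Cb' θ) θ) (hCb'c : Continuous Cb')
    (hCb'0 : ∀ θ, Cb' θ ≠ 0)
    (θa θb : ℝ)
    (hfeas : Ca θa = Cb θb)
    (hmax : IsLocalMaxOn
      (fun p : ℝ × ℝ =>
        na * (up * αa * (∫ x in Ioi p.1, G1a x)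
              - um * (1 - αa) * ∫ x in Ioi p.1, G0a x)
        + nb * (up * αb * (∫ x in Ioi p.2, G1b x)
              - um * (1 - αb) * ∫ x in Ioi p.2, G0b x))
      {p : ℝ × ℝ | Ca p.1 = Cb p.2} (θa, θb)) :
    na * (up * αa * G1a θa - um * (1 - αa) * G0a θa) / Ca' θa
      + nb * (up * αb * G1b θb - um * (1 - αb) * G0b θb) / Cb' θb = 0 :=
  fair_nonstrategic_foc_general up um na nb αa αb G0a G1a G0b G1b Ca Cb Ca' Cb' hG0ac hG1ac hG0bc
    hG1bc hG0ai hG1ai hG0bi hG1bi hCa hCa'c hCa'0 hCb hCb'c hCb'0 θa θb hfeas hmax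
end

section
/- Suppose agents exhibit Type 3 (manipulation-only) best responses: the manipulation impact is Ψ^y(θ) = ∫_{o_M(θ)}^{θ} G^y(z) (1 − T_M(θ − z)) dz with o_M(θ) = θ − T_M⁻¹(1 − C_M) > 0, where T_M is continuously differentiable with density τ_M, T_M(0) = 0, and T_M(T_M⁻¹(1 − C_M)) = 1 − C_M. Define the strategic utility Û(θ) = U(θ) + u₊ α Ψ¹(θ) − u₋ (1−α) Ψ⁰(θ). If θ̂ > T_M⁻¹(1 − C_M) is an interior local maximizer of Û, with G⁰, G¹ continuous and C_M G⁰(o_M(θ̂)) + ∫_{o_M(θ̂)}^{θ̂} G⁰(z) τ_M(θ̂ − z) dz > 0, then [C_M G¹(o_M(θ̂)) + ∫_{o_M(θ̂)}^{θ̂} G¹(z) τ_M(θ̂ − z) dz] / [C_M G⁰(o_M(θ̂)) + ∫_{o_M(θ̂)}^{θ̂} G⁰(z) τ_M(θ̂ − z) dz] = u₋(1−α)/(u₊ α). -/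
noncomputable section

open Set MeasureTheory intervalIntegral

/-- The firm's non-strategic expected utility under threshold `θ`. -/
def firmU (up um α : ℝ) (G0 G1 : ℝ → ℝ) (θ : ℝ) : ℝ :=
  up * α * (∫ x in Ioi θ, G1 x) - um * (1 - α) * ∫ x in Ioi θ, G0 x

/-- Type 3 manipulation impact of label-`y` agents with density `G`:
`Ψ(θ) = ∫_{o_M(θ)}^{θ} G(z)(1 - T_M(θ - z)) dz`, where `o_M(θ) = θ - T_M⁻¹(1 - C_M)`. -/
def PsiT3 (G TM : ℝ → ℝ) (CM θ : ℝ) : ℝ :=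
  ∫ z in (θ - ginv TM (1 - CM))..θ, G z * (1 - TM (θ - z))

/-! The first-order condition is `Û'(θ̂) = 0`. With `b = T_M⁻¹(1 - C_M)` and `Φ` a primitive of
`G`, integration by parts gives `Ψ(θ) = Φ(θ) - C_M Φ(θ - b) - ∫₀ᵇ Φ(θ - u) τ_M(u) du`, which can be
differentiated in `θ` although `G` is merely continuous. Together with `(∫_θ^∞ G)' = -G(θ)` this
makes the derivative of `∫_θ^∞ G + Ψ` equal to `-(C_M G(θ - b) + ∫_{θ-b}^θ G(z) τ_M(θ - z) dz)`,
and `Û'(θ̂) = 0` is then a linear relation between these two quantities for `G⁰` and `G¹`. -/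

theorem hasDerivAt_intervalIntegral_of_continuous_deriv {E : Type*} [NormedAddCommGroup E]
    [NormedSpace ℝ E] {F F' : ℝ → ℝ → E} {a b x₀ : ℝ} (hF : ∀ x, Continuous (F x))
    (hF' : Continuous (Function.uncurry F'))
    (hderiv : ∀ x t, HasDerivAt (fun x => F x t) (F' x t) x) :
    HasDerivAt (fun x => ∫ t in a..b, F x t) (∫ t in a..b, F' x₀ t) x₀ := by
  obtain ⟨M, hM⟩ := ((isCompact_closedBall x₀ 1).prod isCompact_uIcc).exists_bound_of_continuousOn
    (hF'.continuousOn (s := Metric.closedBall x₀ 1 ×ˢ uIcc a b))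
  refine (hasDerivAt_integral_of_dominated_loc_of_deriv_le (bound := fun _ => M)
    (Metric.closedBall_mem_nhds x₀ one_pos) (.of_forall fun x => (hF x).aestronglyMeasurable)
    ((hF x₀).intervalIntegrable _ _) (hF'.uncurry_left x₀).aestronglyMeasurable ?_
    intervalIntegrable_const ?_).2
  · exact .of_forall fun t ht x hx => hM (x, t) ⟨hx, uIoc_subset_uIcc ht⟩
  · exact .of_forall fun t _ x _ => hderiv x t

theorem hasDerivAt_integral_Ioi {G : ℝ → ℝ} {θ : ℝ} (hGi : Integrable G) (hG : ContinuousAt G θ) :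
    HasDerivAt (fun t => ∫ x in Ioi t, G x) (-G θ) θ := by
  have hsplit :
      (fun t => ∫ x in Ioi t, G x) = fun t => (∫ x in Ioi θ, G x) - ∫ x in θ..t, G x := by
    funext t
    rw [← integral_Ioi_sub_Ioi' hGi.integrableOn hGi.integrableOn, sub_sub_cancel]
  rw [hsplit]
  exact (integral_hasDerivAt_right hGi.intervalIntegrable
    hGi.aestronglyMeasurable.stronglyMeasurableAtFilter hG).const_sub _

section TruncatedConvolution

variable {G w w' : ℝ → ℝ}

theorem intervalIntegral_comp_sub_mul (f g : ℝ → ℝ) (b t : ℝ) :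
    ∫ u in 0..b, f (t - u) * g u = ∫ z in (t - b)..t, f z * g (t - z) := by
  simpa only [sub_sub_cancel, sub_zero] using
    integral_comp_sub_left (a := 0) (b := b) (fun z => f z * g (t - z)) t

theorem intervalIntegral_mul_comp_sub_eq (hG : Continuous G) (hw : ∀ u, HasDerivAt w (w' u) u)
    (hw' : Continuous w') (b t : ℝ) :
    ∫ z in (t - b)..t, G z * w (t - z) =
      w 0 * (∫ x in 0..t, G x) - w b * (∫ x in 0..(t - b), G x)
        + ∫ u in 0..b, (∫ x in 0..(t - u), G x) * w' u := by
  have hprim (u : ℝ) : HasDerivAt (fun u => -∫ x in 0..(t - u), G x) (G (t - u)) u := by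
    have h : HasDerivAt (fun u => ∫ x in 0..(t - u), G x) (G (t - u) * -1) u :=
      (hG.integral_hasStrictDerivAt 0 (t - u)).hasDerivAt.comp u ((hasDerivAt_id u).const_sub t)
    simpa using h.fun_neg
  have hparts := integral_mul_deriv_eq_deriv_mul (a := 0) (b := b) (fun u _ => hw u)
    (fun u _ => hprim u) (hw'.intervalIntegrable _ _)
    ((hG.comp (continuous_const.sub continuous_id)).intervalIntegrable _ _)
  rw [← intervalIntegral_comp_sub_mul]
  simp only [mul_comm (G _), hparts, sub_zero, mul_comm (w' _), neg_mul, mul_neg,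
    intervalIntegral.integral_neg]
  ring

theorem hasDerivAt_intervalIntegral_mul_comp_sub (hG : Continuous G)
    (hw : ∀ u, HasDerivAt w (w' u) u) (hw' : Continuous w') (b θ : ℝ) :
    HasDerivAt (fun t => ∫ z in (t - b)..t, G z * w (t - z))
      (w 0 * G θ - w b * G (θ - b) + ∫ z in (θ - b)..θ, G z * w' (θ - z)) θ := by
  have hprim (y : ℝ) : HasDerivAt (fun y => ∫ x in 0..y, G x) (G y) y :=
    (hG.integral_hasStrictDerivAt 0 y).hasDerivAt
  have hprim_cont : Continuous fun y => ∫ x in 0..y, G x :=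
    continuous_primitive (fun _ _ => hG.intervalIntegrable _ _) 0
  have hinner : HasDerivAt (fun t => ∫ u in 0..b, (∫ x in 0..(t - u), G x) * w' u)
      (∫ u in 0..b, G (θ - u) * w' u) θ :=
    hasDerivAt_intervalIntegral_of_continuous_deriv (F' := fun t u => G (t - u) * w' u)
      (fun t => (hprim_cont.comp (continuous_const.sub continuous_id)).mul hw')
      ((hG.comp (continuous_fst.sub continuous_snd)).mul (hw'.comp continuous_snd))
      fun t u => by
        simpa using ((hprim (t - u)).comp t ((hasDerivAt_id t).sub_const u)).mul_const (w' u)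
  simp only [intervalIntegral_mul_comp_sub_eq hG hw hw', ← intervalIntegral_comp_sub_mul]
  simpa using (((hprim θ).const_mul (w 0)).fun_sub
    (((hprim (θ - b)).comp θ ((hasDerivAt_id θ).sub_const b)).const_mul (w b))).fun_add hinner

end TruncatedConvolution

theorem hasDerivAt_integral_Ioi_add_psiT3 {G TM τM : ℝ → ℝ} {CM : ℝ} (hGi : Integrable G)
    (hG : Continuous G) (hτM : Continuous τM) (hTM : ∀ b, HasDerivAt TM (τM b) b)
    (hTM0 : TM 0 = 0) (hTMinv : TM (ginv TM (1 - CM)) = 1 - CM) (θ : ℝ) :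
    HasDerivAt (fun t => (∫ x in Ioi t, G x) + PsiT3 G TM CM t)
      (-(CM * G (θ - ginv TM (1 - CM))
        + ∫ z in (θ - ginv TM (1 - CM))..θ, G z * τM (θ - z))) θ := by
  refine ((hasDerivAt_integral_Ioi hGi hG.continuousAt).fun_add
    (hasDerivAt_intervalIntegral_mul_comp_sub (w' := fun u => -τM u) hG
      (fun u => (hTM u).const_sub 1) hτM.neg (ginv TM (1 - CM)) θ)).congr_deriv ?_
  simp only [hTM0, hTMinv, mul_neg, intervalIntegral.integral_neg]
  ring

theorem strategic_unfair_foc_type3_general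
    (up um α CM : ℝ) (G0 G1 TM τM : ℝ → ℝ)
    (hup : 0 < up) (hα : α ∈ Ioo (0 : ℝ) 1)
    (hG0c : Continuous G0) (hG1c : Continuous G1)
    (hG0int : Integrable G0) (hG1int : Integrable G1)
    (hτMc : Continuous τM)
    (hTM' : ∀ b, HasDerivAt TM (τM b) b)
    (hTM0 : TM 0 = 0)
    (hTMinv : TM (ginv TM (1 - CM)) = 1 - CM)
    (θh : ℝ)
    (hmax : IsLocalMax
      (fun t => firmU up um α G0 G1 t
        + up * α * PsiT3 G1 TM CM t - um * (1 - α) * PsiT3 G0 TM CM t) θh)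
    (hden : 0 < CM * G0 (θh - ginv TM (1 - CM))
        + ∫ z in (θh - ginv TM (1 - CM))..θh, G0 z * τM (θh - z)) :
    (CM * G1 (θh - ginv TM (1 - CM))
        + ∫ z in (θh - ginv TM (1 - CM))..θh, G1 z * τM (θh - z))
      / (CM * G0 (θh - ginv TM (1 - CM))
        + ∫ z in (θh - ginv TM (1 - CM))..θh, G0 z * τM (θh - z))
      = um * (1 - α) / (up * α) := by
  have hobjective : (fun t => firmU up um α G0 G1 t
        + up * α * PsiT3 G1 TM CM t - um * (1 - α) * PsiT3 G0 TM CM t)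
      = fun t => up * α * ((∫ x in Ioi t, G1 x) + PsiT3 G1 TM CM t)
          - um * (1 - α) * ((∫ x in Ioi t, G0 x) + PsiT3 G0 TM CM t) := by
    funext t
    rw [firmU]
    ring
  have hfoc := hmax.hasDerivAt_eq_zero <| hobjective ▸
    ((hasDerivAt_integral_Ioi_add_psiT3 hG1int hG1c hτMc hTM' hTM0 hTMinv θh).const_mul
      (up * α)).fun_sub
    ((hasDerivAt_integral_Ioi_add_psiT3 hG0int hG0c hτMc hTM' hTM0 hTMinv θh).const_mul
      (um * (1 - α)))
  have hupα : up * α ≠ 0 := (mul_pos hup hα.1).ne'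
  rw [div_eq_div_iff hden.ne' hupα]
  linear_combination -hfoc

/-- First-order condition for the unfair strategic firm under Type 3 (manipulation-only)
best responses (Lemma 3, Type 3 column of Table 2). -/
theorem strategic_unfair_foc_type3
    (up um α CM : ℝ) (G0 G1 TM τM : ℝ → ℝ)
    (hup : 0 < up) (hum : 0 < um) (hα : α ∈ Ioo (0 : ℝ) 1)
    (hCM0 : 0 ≤ CM) (hCM1 : CM < 1)
    (hG0c : Continuous G0) (hG1c : Continuous G1)
    (hG0nn : ∀ x, 0 ≤ G0 x) (hG1nn : ∀ x, 0 ≤ G1 x)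
    (hG0int : Integrable G0) (hG1int : Integrable G1)
    (hτMc : Continuous τM)
    (hTM' : ∀ b, HasDerivAt TM (τM b) b)
    (hTM0 : TM 0 = 0)
    (hTMinv : TM (ginv TM (1 - CM)) = 1 - CM)
    (θh : ℝ) (hθh : ginv TM (1 - CM) < θh)
    (hmax : IsLocalMax
      (fun t => firmU up um α G0 G1 t
        + up * α * PsiT3 G1 TM CM t - um * (1 - α) * PsiT3 G0 TM CM t) θh)
    (hden : 0 < CM * G0 (θh - ginv TM (1 - CM))
        + ∫ z in (θh - ginv TM (1 - CM))..θh, G0 z * τM (θh - z)) :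
    (CM * G1 (θh - ginv TM (1 - CM))
        + ∫ z in (θh - ginv TM (1 - CM))..θh, G1 z * τM (θh - z))
      / (CM * G0 (θh - ginv TM (1 - CM))
        + ∫ z in (θh - ginv TM (1 - CM))..θh, G0 z * τM (θh - z))
      = um * (1 - α) / (up * α) :=
  strategic_unfair_foc_type3_general up um α CM G0 G1 TM τM hup hα hG0c hG1c hG0int hG1int hτMc hTM'
    hTM0 hTMinv θh hmax hden
end
end

section
/- Suppose agents exhibit Type 1 (affordable improvement) best responses: for label y ∈ {0,1}, the improvement impact is Φ^y(θ) = ∫_{o_I^y(θ)}^{r(θ)} G^y(z)(1 − T_I^y(θ − z)) dz and the manipulation impact is Ψ^y(θ) = ∫_{r(θ)}^{θ} G^y(z)(1 − T_M(θ − z)) dz, where o_I^y(θ) = θ − (T_I^y)⁻¹(1 − C_I) > 0 and r(θ) = θ − T_M⁻¹(C_I − C_M) > o_I^y(θ), T_M and T_I^y are continuously differentiable with densities τ_M, τ_I^y, T_M(0) = 0, T_M(T_M⁻¹(p)) = p and T_I^y((T_I^y)⁻¹(p)) = p at the relevant values, and T_M⁻¹(C_I − C_M) ≤ b̲_I^y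 (acceptance under improvement is certain at r). Define the strategic utility Û(θ) = U(θ) + u₊ α (Φ¹(θ) + Ψ¹(θ)) + u₊ (1−α) Φ⁰(θ) − u₋ (1−α) Ψ⁰(θ). If θ̂ is an interior local maximizer of Û with (1 − (C_I − C_M)) G⁰(r(θ̂)) + ∫_{r(θ̂)}^{θ̂} G⁰(z) τ_M(θ̂ − z) dz > 0, then [C_I G¹(o_I¹(θ̂)) + ∫_{o_I¹(θ̂)}^{r(θ̂)} G¹(z) τ_I¹(θ̂ − z) dz + ∫_{r(θ̂)}^{θ̂} G¹(z) τ_M(θ̂ − z) dz − (C_I − C_M) G¹(r(θ̂)) + ((1−α)/α)(C_I G⁰(o_I⁰(θ̂)) + ∫_{o_I⁰(θ̂)}^{r(θ̂)} G⁰(z) τ_I⁰(θ̂ − z) dz − G⁰(r(θ̂)))] / [(1 − (C_I − C_M)) G⁰(r(θ̂)) + ∫_{r(θ̂)}^{θ̂} G⁰(z) τ_M(θ̂ − z) dz] = u₋(1−α)/(u₊ α). -/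
/-!
At an interior local maximum the derivative of `Û` vanishes. Each impact term integrates
`G z * (1 - T (θ - z))` over a window `[θ - a, θ - b]` moving with `θ`. Integrating by parts against
a primitive `P` of `G` moves the `θ`-dependence into `P (θ - u)`, which is `C¹`, so the Leibniz rule
applies and the derivative is `G (θ - b) (1 - T b) - G (θ - a) (1 - T a) - ∫ G z τ (θ - z)`.
At the window ends the CDFs take the values fixed by the quantile hypotheses (and `T_I = 0` at `r`,
where improvement is certain); the `G θ` terms of `U'` and `Ψ'` cancel, and the first-order
condition rearranges to the stated ratio.
-/

noncomputable section

open Set MeasureTheory intervalIntegral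

/-- Improvement opt-in feature `o_I(θ) = θ - T_I⁻¹(1 - C_I)`. -/
def oI (TI : ℝ → ℝ) (CI θ : ℝ) : ℝ := θ - ginv TI (1 - CI)

/-- Risk-taker feature `r(θ) = θ - T_M⁻¹(C_I - C_M)`. -/
def rT (TM : ℝ → ℝ) (CM CI θ : ℝ) : ℝ := θ - ginv TM (CI - CM)

/-- Type 1 improvement impact `Φ(θ) = ∫_{o_I(θ)}^{r(θ)} G(z)(1 - T_I(θ - z)) dz`. -/
def PhiT1 (G TI TM : ℝ → ℝ) (CM CI θ : ℝ) : ℝ :=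
  ∫ z in (oI TI CI θ)..(rT TM CM CI θ), G z * (1 - TI (θ - z))

/-- Type 1 manipulation impact `Ψ(θ) = ∫_{r(θ)}^{θ} G(z)(1 - T_M(θ - z)) dz`. -/
def PsiT1 (G TM : ℝ → ℝ) (CM CI θ : ℝ) : ℝ :=
  ∫ z in (rT TM CM CI θ)..θ, G z * (1 - TM (θ - z))

theorem hasDerivAt_intervalIntegral_of_continuous_partial {F F' : ℝ → ℝ → ℝ} {a b x₀ : ℝ}
    (hF : Continuous (Function.uncurry F)) (hF' : Continuous (Function.uncurry F'))
    (hderiv : ∀ x u, HasDerivAt (fun x => F x u) (F' x u) x) :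
    HasDerivAt (fun x => ∫ u in a..b, F x u) (∫ u in a..b, F' x₀ u) x₀ := by
  obtain ⟨C, hC⟩ := ((isCompact_closedBall x₀ 1).prod isCompact_uIcc).exists_bound_of_continuousOn
    (hF'.continuousOn (s := Metric.closedBall x₀ 1 ×ˢ uIcc a b))
  have hFx : ∀ x, Continuous (F x) := fun x => hF.comp (Continuous.prodMk_right x)
  refine (hasDerivAt_integral_of_dominated_loc_of_deriv_le (bound := fun _ => C)
    (Metric.ball_mem_nhds x₀ one_pos) (.of_forall fun x => (hFx x).aestronglyMeasurable)
    ((hFx x₀).intervalIntegrable _ _)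
    (hF'.comp (Continuous.prodMk_right x₀)).aestronglyMeasurable
    (.of_forall fun u hu x hx => hC (x, u) ⟨Metric.ball_subset_closedBall hx, uIoc_subset_uIcc hu⟩)
    intervalIntegrable_const (.of_forall fun u _ x _ => hderiv x u)).2

theorem hasDerivAt_setIntegral_Ioi {G : ℝ → ℝ} (hG : Continuous G) (hGi : Integrable G) (θ : ℝ) :
    HasDerivAt (fun t => ∫ x in Ioi t, G x) (-G θ) θ := by
  have heq : (fun t => ∫ x in Ioi t, G x) = fun t => (∫ x in Ioi 0, G x) - ∫ x in (0 : ℝ)..t, G x :=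
    funext fun t => by rw [← integral_Ioi_sub_Ioi' hGi.integrableOn hGi.integrableOn]; ring
  rw [heq]
  exact (hG.integral_hasStrictDerivAt 0 θ).hasDerivAt.const_sub _

section Window

variable {G P K k : ℝ → ℝ}

theorem integral_mul_comp_sub_eq (hP : ∀ x, HasDerivAt P (G x) x) (hG : Continuous G)
    (hK : ∀ x, HasDerivAt K (k x) x) (hk : Continuous k) (a b t : ℝ) :
    ∫ z in (t - a)..(t - b), G z * K (t - z)
      = P (t - b) * K b - P (t - a) * K a + ∫ u in b..a, P (t - u) * k u := by
  have hKt : ∀ z, HasDerivAt (fun z => K (t - z)) (-k (t - z)) z := fun z =>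
    (hK (t - z)).comp_const_sub t z
  have parts := integral_mul_deriv_eq_deriv_mul (fun x _ => hP x) (fun x _ => hKt x)
    (hG.intervalIntegrable (t - a) (t - b))
    ((hk.comp (continuous_const.sub continuous_id)).neg.intervalIntegrable _ _)
  have subst : ∫ u in b..a, P (t - u) * k u = ∫ z in (t - a)..(t - b), P z * k (t - z) := by
    simpa only [sub_sub_cancel] using integral_comp_sub_left (fun z => P z * k (t - z)) t
  simp only [sub_sub_cancel, mul_neg, intervalIntegral.integral_neg] at parts
  rw [subst]
  linarith

theorem hasDerivAt_integral_mul_comp_sub (hG : Continuous G) (hK : ∀ x, HasDerivAt K (k x) x)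
    (hk : Continuous k) (a b θ : ℝ) :
    HasDerivAt (fun t => ∫ z in (t - a)..(t - b), G z * K (t - z))
      (G (θ - b) * K b - G (θ - a) * K a + ∫ z in (θ - a)..(θ - b), G z * k (θ - z)) θ := by
  set P := fun x => ∫ u in (0 : ℝ)..x, G u
  have hP : ∀ x, HasDerivAt P (G x) x := fun x => (hG.integral_hasStrictDerivAt 0 x).hasDerivAt
  have hP_sub : ∀ c, HasDerivAt (fun t => P (t - c)) (G (θ - c)) θ := fun c =>
    (hP (θ - c)).comp_sub_const θ c
  have hconv : HasDerivAt (fun t => ∫ u in b..a, P (t - u) * k u)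
      (∫ u in b..a, G (θ - u) * k u) θ := by
    refine hasDerivAt_intervalIntegral_of_continuous_partial (F := fun x u => P (x - u) * k u)
      (F' := fun x u => G (x - u) * k u) (by fun_prop) (by fun_prop) fun x u => ?_
    exact ((hP (x - u)).comp_sub_const x u).mul_const (k u)
  have subst : ∫ u in b..a, G (θ - u) * k u = ∫ z in (θ - a)..(θ - b), G z * k (θ - z) := by
    simpa only [sub_sub_cancel] using integral_comp_sub_left (fun z => G z * k (θ - z)) θ
  rw [funext (integral_mul_comp_sub_eq hP hG hK hk a b), ← subst]
  exact (((hP_sub b).mul_const _).sub ((hP_sub a).mul_const _)).add hconv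

end Window

theorem hasDerivAt_firmU {up um α : ℝ} {G0 G1 : ℝ → ℝ} (hG0 : Continuous G0)
    (hG1 : Continuous G1) (hG0i : Integrable G0) (hG1i : Integrable G1) (θ : ℝ) :
    HasDerivAt (fun t => firmU up um α G0 G1 t) (-(up * α * G1 θ) + um * (1 - α) * G0 θ) θ := by
  refine (((hasDerivAt_setIntegral_Ioi hG1 hG1i θ).const_mul (up * α)).sub
    ((hasDerivAt_setIntegral_Ioi hG0 hG0i θ).const_mul (um * (1 - α)))).congr_deriv ?_
  ring

section Type1

variable {G TI τI TM τM : ℝ → ℝ} {CM CI : ℝ}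

theorem hasDerivAt_PhiT1 (hG : Continuous G) (hTI : ∀ b, HasDerivAt TI (τI b) b)
    (hτI : Continuous τI) (hTI_oI : TI (ginv TI (1 - CI)) = 1 - CI)
    (hTI_rT : TI (ginv TM (CI - CM)) = 0) (θ : ℝ) :
    HasDerivAt (fun t => PhiT1 G TI TM CM CI t)
      (G (rT TM CM CI θ) - CI * G (oI TI CI θ)
        - ∫ z in (oI TI CI θ)..(rT TM CM CI θ), G z * τI (θ - z)) θ := by
  refine (hasDerivAt_integral_mul_comp_sub hG (fun b => (hTI b).const_sub 1) hτI.neg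
    (ginv TI (1 - CI)) (ginv TM (CI - CM)) θ).congr_deriv ?_
  simp only [hTI_oI, hTI_rT, mul_neg, intervalIntegral.integral_neg, oI, rT]
  ring

theorem hasDerivAt_PsiT1 (hG : Continuous G) (hTM : ∀ b, HasDerivAt TM (τM b) b)
    (hτM : Continuous τM) (hTM_zero : TM 0 = 0) (hTM_rT : TM (ginv TM (CI - CM)) = CI - CM)
    (θ : ℝ) :
    HasDerivAt (fun t => PsiT1 G TM CM CI t)
      (G θ - (1 - (CI - CM)) * G (rT TM CM CI θ)
        - ∫ z in (rT TM CM CI θ)..θ, G z * τM (θ - z)) θ := by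
  have h := hasDerivAt_integral_mul_comp_sub hG (fun b => (hTM b).const_sub 1) hτM.neg
    (ginv TM (CI - CM)) 0 θ
  simp only [sub_zero] at h
  refine h.congr_deriv ?_
  simp only [hTM_zero, hTM_rT, mul_neg, intervalIntegral.integral_neg, rT]
  ring

end Type1

theorem strategic_unfair_foc_type1_general
    (up um α CM CI : ℝ) (G0 G1 TM τM TI0 τI0 TI1 τI1 : ℝ → ℝ)
    (bI0lo bI1lo : ℝ)
    (hup : 0 < up) (hα : α ∈ Ioo (0 : ℝ) 1)
    (hG0c : Continuous G0) (hG1c : Continuous G1)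
    (hG0int : Integrable G0) (hG1int : Integrable G1)
    (hτMc : Continuous τM) (hTM' : ∀ b, HasDerivAt TM (τM b) b)
    (hτI0c : Continuous τI0) (hTI0' : ∀ b, HasDerivAt TI0 (τI0 b) b)
    (hτI1c : Continuous τI1) (hTI1' : ∀ b, HasDerivAt TI1 (τI1 b) b)
    (hTM0 : TM 0 = 0)
    (hTMinv : TM (ginv TM (CI - CM)) = CI - CM)
    (hTI0inv : TI0 (ginv TI0 (1 - CI)) = 1 - CI)
    (hTI1inv : TI1 (ginv TI1 (1 - CI)) = 1 - CI)
    (hTI0zero : ∀ b ≤ bI0lo, TI0 b = 0)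
    (hTI1zero : ∀ b ≤ bI1lo, TI1 b = 0)
    (hcert0 : ginv TM (CI - CM) ≤ bI0lo)
    (hcert1 : ginv TM (CI - CM) ≤ bI1lo)
    (θh : ℝ)
    (hmax : IsLocalMax
      (fun t => firmU up um α G0 G1 t
        + up * α * (PhiT1 G1 TI1 TM CM CI t + PsiT1 G1 TM CM CI t)
        + up * (1 - α) * PhiT1 G0 TI0 TM CM CI t
        - um * (1 - α) * PsiT1 G0 TM CM CI t) θh)
    (hden : 0 < (1 - (CI - CM)) * G0 (rT TM CM CI θh)
        + ∫ z in (rT TM CM CI θh)..θh, G0 z * τM (θh - z)) :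
    (CI * G1 (oI TI1 CI θh)
        + (∫ z in (oI TI1 CI θh)..(rT TM CM CI θh), G1 z * τI1 (θh - z))
        + (∫ z in (rT TM CM CI θh)..θh, G1 z * τM (θh - z))
        - (CI - CM) * G1 (rT TM CM CI θh)
        + ((1 - α) / α) * (CI * G0 (oI TI0 CI θh)
            + (∫ z in (oI TI0 CI θh)..(rT TM CM CI θh), G0 z * τI0 (θh - z))
            - G0 (rT TM CM CI θh)))
      / ((1 - (CI - CM)) * G0 (rT TM CM CI θh)
        + ∫ z in (rT TM CM CI θh)..θh, G0 z * τM (θh - z))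
      = um * (1 - α) / (up * α) := by
  have hΦ1 := hasDerivAt_PhiT1 hG1c hTI1' hτI1c hTI1inv (hTI1zero _ hcert1) θh
  have hΦ0 := hasDerivAt_PhiT1 hG0c hTI0' hτI0c hTI0inv (hTI0zero _ hcert0) θh
  have hΨ1 := hasDerivAt_PsiT1 hG1c hTM' hτMc hTM0 hTMinv θh
  have hΨ0 := hasDerivAt_PsiT1 hG0c hTM' hτMc hTM0 hTMinv θh
  have hfoc := hmax.hasDerivAt_eq_zero <|
    (((hasDerivAt_firmU hG0c hG1c hG0int hG1int θh).add ((hΦ1.add hΨ1).const_mul (up * α))).add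
      (hΦ0.const_mul (up * (1 - α)))).sub (hΨ0.const_mul (um * (1 - α)))
  rw [div_eq_div_iff hden.ne' (mul_pos hup hα.1).ne']
  field_simp [hα.1.ne']
  linear_combination -hfoc

/-- First-order condition for the unfair strategic firm under Type 1 (affordable
improvement) best responses (Lemma 3, Type 1 column of Table 2). -/
theorem strategic_unfair_foc_type1
    (up um α CM CI : ℝ) (G0 G1 TM τM TI0 τI0 TI1 τI1 : ℝ → ℝ)
    (bI0lo bI1lo : ℝ)
    (hup : 0 < up) (hum : 0 < um) (hα : α ∈ Ioo (0 : ℝ) 1)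
    (hCM0 : 0 ≤ CM) (hCMI : CM < CI) (hCI : CI < 1)
    (hG0c : Continuous G0) (hG1c : Continuous G1)
    (hG0nn : ∀ x, 0 ≤ G0 x) (hG1nn : ∀ x, 0 ≤ G1 x)
    (hG0int : Integrable G0) (hG1int : Integrable G1)
    (hτMc : Continuous τM) (hTM' : ∀ b, HasDerivAt TM (τM b) b)
    (hτI0c : Continuous τI0) (hTI0' : ∀ b, HasDerivAt TI0 (τI0 b) b)
    (hτI1c : Continuous τI1) (hTI1' : ∀ b, HasDerivAt TI1 (τI1 b) b)
    (hTM0 : TM 0 = 0)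
    (hTMinv : TM (ginv TM (CI - CM)) = CI - CM)
    (hTI0inv : TI0 (ginv TI0 (1 - CI)) = 1 - CI)
    (hTI1inv : TI1 (ginv TI1 (1 - CI)) = 1 - CI)
    (hTI0zero : ∀ b ≤ bI0lo, TI0 b = 0)
    (hTI1zero : ∀ b ≤ bI1lo, TI1 b = 0)
    (hcert0 : ginv TM (CI - CM) ≤ bI0lo)
    (hcert1 : ginv TM (CI - CM) ≤ bI1lo)
    (θh : ℝ)
    (hoI0 : 0 < oI TI0 CI θh) (hoI1 : 0 < oI TI1 CI θh)
    (hr0 : oI TI0 CI θh < rT TM CM CI θh) (hr1 : oI TI1 CI θh < rT TM CM CI θh)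
    (hmax : IsLocalMax
      (fun t => firmU up um α G0 G1 t
        + up * α * (PhiT1 G1 TI1 TM CM CI t + PsiT1 G1 TM CM CI t)
        + up * (1 - α) * PhiT1 G0 TI0 TM CM CI t
        - um * (1 - α) * PsiT1 G0 TM CM CI t) θh)
    (hden : 0 < (1 - (CI - CM)) * G0 (rT TM CM CI θh)
        + ∫ z in (rT TM CM CI θh)..θh, G0 z * τM (θh - z)) :
    (CI * G1 (oI TI1 CI θh)
        + (∫ z in (oI TI1 CI θh)..(rT TM CM CI θh), G1 z * τI1 (θh - z))
        + (∫ z in (rT TM CM CI θh)..θh, G1 z * τM (θh - z))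
        - (CI - CM) * G1 (rT TM CM CI θh)
        + ((1 - α) / α) * (CI * G0 (oI TI0 CI θh)
            + (∫ z in (oI TI0 CI θh)..(rT TM CM CI θh), G0 z * τI0 (θh - z))
            - G0 (rT TM CM CI θh)))
      / ((1 - (CI - CM)) * G0 (rT TM CM CI θh)
        + ∫ z in (rT TM CM CI θh)..θh, G0 z * τM (θh - z))
      = um * (1 - α) / (up * α) :=
  strategic_unfair_foc_type1_general up um α CM CI G0 G1 TM τM TI0 τI0 TI1 τI1 bI0lo bI1lo hup hα
    hG0c hG1c hG0int hG1int hτMc hTM' hτI0c hTI0' hτI1c hTI1' hTM0 hTMinv hTI0inv hTI1inv hTI0zero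
    hTI1zero hcert0 hcert1 θh hmax hden
end
end

section
/- Suppose each feature density G^y is supported on a bounded interval [x̲^y, x̄^y] with x̲⁰ ≤ μ⁰ < x̲¹ < x̄⁰ < μ¹ ≤ x̄¹ (where μ^y is the mean of G^y), and G^y > 0 on the interior of its support. Then every global maximizer θ* of U satisfies x̲¹ ≤ θ* ≤ x̄⁰. -/
noncomputable section

open Set MeasureTheory

theorem integral_Ioi_eq_integral_Ioi_of_eqOn_zero {f : ℝ → ℝ} {a b : ℝ} (hf : Integrable f)
    (hab : a ≤ b) (hzero : EqOn f 0 (Ioo a b)) :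
    ∫ x in Ioi a, f x = ∫ x in Ioi b, f x := by
  have hgap : ∫ x in a..b, f x = 0 := by
    rw [intervalIntegral.integral_of_le hab, ← setIntegral_congr_set Ioo_ae_eq_Ioc]
    exact setIntegral_eq_zero_of_forall_eq_zero hzero
  rw [← intervalIntegral.integral_interval_add_Ioi hf.integrableOn hf.integrableOn, hgap,
    zero_add]

theorem integral_Ioi_lt_integral_Ioi_of_pos_on {f : ℝ → ℝ} {a b c d : ℝ} (hf : Integrable f)
    (hf0 : 0 ≤ f) (hac : a ≤ c) (hcd : c < d) (hdb : d ≤ b) (hpos : ∀ x ∈ Ioo c d, 0 < f x) :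
    ∫ x in Ioi b, f x < ∫ x in Ioi a, f x := by
  have hcd_pos : 0 < ∫ x in c..d, f x :=
    intervalIntegral.intervalIntegral_pos_of_pos_on hf.intervalIntegrable hpos hcd
  have hcd_le : ∫ x in c..d, f x ≤ ∫ x in a..b, f x :=
    intervalIntegral.integral_mono_interval hac hcd.le hdb (ae_of_all _ hf0)
      hf.intervalIntegrable
  rw [← intervalIntegral.integral_interval_add_Ioi (a := a) (b := b) hf.integrableOn
    hf.integrableOn]
  linarith

theorem firmU_lt_firmU {up um α : ℝ} {G0 G1 : ℝ → ℝ} {s t : ℝ} (hup : 0 < up) (hum : 0 < um)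
    (hα : α ∈ Ioo (0 : ℝ) 1)
    (h1 : ∫ x in Ioi s, G1 x ≤ ∫ x in Ioi t, G1 x) (h0 : ∫ x in Ioi t, G0 x ≤ ∫ x in Ioi s, G0 x)
    (hstrict : ∫ x in Ioi s, G1 x < ∫ x in Ioi t, G1 x ∨ ∫ x in Ioi t, G0 x < ∫ x in Ioi s, G0 x) :
    firmU up um α G0 G1 s < firmU up um α G0 G1 t := by
  have hA : 0 < up * α := mul_pos hup hα.1
  have hB : 0 < um * (1 - α) := mul_pos hum (sub_pos.2 hα.2)
  unfold firmU
  rcases hstrict with hstrict | hstrict <;> nlinarith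

theorem nonstrategic_optimum_location_general
    (up um α : ℝ) (G0 G1 : ℝ → ℝ)
    (μ0 μ1 x0lo x0hi x1lo x1hi : ℝ)
    (hup : 0 < up) (hum : 0 < um) (hα : α ∈ Ioo (0 : ℝ) 1)
    (hG0c : Continuous G0) (hG1c : Continuous G1)
    (hG0nn : ∀ x, 0 ≤ G0 x) (hG1nn : ∀ x, 0 ≤ G1 x)
    (hG0supp : ∀ x, x ∉ Icc x0lo x0hi → G0 x = 0)
    (hG1supp : ∀ x, x ∉ Icc x1lo x1hi → G1 x = 0)
    (hG0pos : ∀ x ∈ Ioo x0lo x0hi, 0 < G0 x)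
    (hG1pos : ∀ x ∈ Ioo x1lo x1hi, 0 < G1 x)
    (ho1 : x0lo ≤ μ0) (ho2 : μ0 < x1lo) (ho3 : x1lo < x0hi)
    (ho4 : x0hi < μ1) (ho5 : μ1 ≤ x1hi)
    (θs : ℝ)
    (hθs : ∀ t, firmU up um α G0 G1 t ≤ firmU up um α G0 G1 θs) :
    x1lo ≤ θs ∧ θs ≤ x0hi := by
  have hG0int : Integrable G0 :=
    hG0c.integrable_of_hasCompactSupport (HasCompactSupport.intro isCompact_Icc hG0supp)
  have hG1int : Integrable G1 :=
    hG1c.integrable_of_hasCompactSupport (HasCompactSupport.intro isCompact_Icc hG1supp)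
  constructor
  · by_contra! hθ
    -- Raising the threshold to `x1lo` rejects only unqualified agents, and some of them.
    have hG1 := integral_Ioi_eq_integral_Ioi_of_eqOn_zero hG1int hθ.le
      fun x hx ↦ hG1supp x fun hmem ↦ hx.2.not_ge hmem.1
    have hG0 := integral_Ioi_lt_integral_Ioi_of_pos_on hG0int hG0nn (le_max_left θs x0lo)
      (max_lt hθ (ho1.trans_lt ho2)) le_rfl
      fun x hx ↦ hG0pos x ⟨(le_max_right _ _).trans_lt hx.1, hx.2.trans ho3⟩
    exact (hθs x1lo).not_gt (firmU_lt_firmU hup hum hα hG1.le hG0.le (.inr hG0))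
  · by_contra! hθ
    -- Lowering the threshold to `x0hi` accepts only qualified agents, and some of them.
    have hG0 := integral_Ioi_eq_integral_Ioi_of_eqOn_zero hG0int hθ.le
      fun x hx ↦ hG0supp x fun hmem ↦ hx.1.not_ge hmem.2
    have hG1 := integral_Ioi_lt_integral_Ioi_of_pos_on hG1int hG1nn le_rfl
      (lt_min hθ (ho4.trans_le ho5)) (min_le_left θs x1hi)
      fun x hx ↦ hG1pos x ⟨ho3.trans hx.1, hx.2.trans_le (min_le_right _ _)⟩
    exact (hθs x0hi).not_gt (firmU_lt_firmU hup hum hα hG1.le hG0.le (.inl hG1))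

/-- With bounded overlapping supports `[x̲⁰, x̄⁰]` and `[x̲¹, x̄¹]` satisfying
`x̲⁰ ≤ μ⁰ < x̲¹ < x̄⁰ < μ¹ ≤ x̄¹`, every global maximizer of the non-strategic utility
lies in `[x̲¹, x̄⁰]`. -/
theorem nonstrategic_optimum_location
    (up um α : ℝ) (G0 G1 : ℝ → ℝ)
    (μ0 μ1 x0lo x0hi x1lo x1hi : ℝ)
    (hup : 0 < up) (hum : 0 < um) (hα : α ∈ Ioo (0 : ℝ) 1)
    (hG0c : Continuous G0) (hG1c : Continuous G1)
    (hG0nn : ∀ x, 0 ≤ G0 x) (hG1nn : ∀ x, 0 ≤ G1 x)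
    (hG0tot : ∫ x, G0 x = 1) (hG1tot : ∫ x, G1 x = 1)
    (hG0supp : ∀ x, x ∉ Icc x0lo x0hi → G0 x = 0)
    (hG1supp : ∀ x, x ∉ Icc x1lo x1hi → G1 x = 0)
    (hG0pos : ∀ x ∈ Ioo x0lo x0hi, 0 < G0 x)
    (hG1pos : ∀ x ∈ Ioo x1lo x1hi, 0 < G1 x)
    (hμ0 : μ0 = ∫ x, x * G0 x) (hμ1 : μ1 = ∫ x, x * G1 x)
    (ho1 : x0lo ≤ μ0) (ho2 : μ0 < x1lo) (ho3 : x1lo < x0hi)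
    (ho4 : x0hi < μ1) (ho5 : μ1 ≤ x1hi)
    (θs : ℝ)
    (hθs : ∀ t, firmU up um α G0 G1 t ≤ firmU up um α G0 G1 θs) :
    x1lo ≤ θs ∧ θs ≤ x0hi :=
  nonstrategic_optimum_location_general up um α G0 G1 μ0 μ1 x0lo x0hi x1lo x1hi hup hum hα hG0c hG1c
    hG0nn hG1nn hG0supp hG1supp hG0pos hG1pos ho1 ho2 ho3 ho4 ho5 θs hθs
end
end
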